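/- arXiv:2206.00873 — 7 statements merged into one kernel-verified Lean document; each statement's English description precedes it below -/
import Mathlib

section
/- For any probability distribution p on a finite set V of size K and any element i* in V, the Shannon entropy H(p) = ∑_{i∈V} p(i) · ln(1/p(i)) satisfies H(p) ≤ (1 − p(i*)) · (ln((K−1)/(1 − p(i*))) + 1), provided p(i*) < 1. -/
theorem shannon_entropy_bound {V : Type*} [Fintype V] (K : ℕ) (hK : K = Fintype.card V)
    (hK2 : 2 ≤ K) (p : V → ℝ) (hpos : ∀ i, 0 < p i) (hsum : ∑ i, p i = 1)
    (istar : V) (hlt : p istar < 1) :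
    ∑ i, p i * Real.log (1 / p i) ≤
      (1 - p istar) * (Real.log ((K - 1) / (1 - p istar)) + 1) := by
  classical
  have hεpos : (0:ℝ) < 1 - p istar := by linarith
  set ε : ℝ := 1 - p istar with hε
  set S : Finset V := Finset.univ.erase istar with hS
  have hsumS : ∑ i ∈ S, p i = ε := by
    have h := Finset.add_sum_erase Finset.univ p (Finset.mem_univ istar)
    rw [hsum] at h
    rw [hS, hε]; linarith
  have hcard : (S.card : ℝ) = (K : ℝ) - 1 := by
    rw [hS, Finset.card_erase_of_mem (Finset.mem_univ istar), Finset.card_univ, ← hK]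
    have h1 : 1 ≤ K := by omega
    push_cast [Nat.cast_sub h1]
    ring
  have jensen : ∑ i ∈ S, p i * Real.log (1 / p i) ≤ ε * Real.log (((K : ℝ) - 1) / ε) := by
    have hconc : ConcaveOn ℝ (Set.Ioi (0:ℝ)) Real.log :=
      strictConcaveOn_log_Ioi.concaveOn
    have key := hconc.le_map_sum (t := S) (w := fun i => p i / ε)
      (p := fun i => 1 / p i)
      (fun i _ => (div_pos (hpos i) hεpos).le)
      (by rw [← Finset.sum_div, hsumS, div_self hεpos.ne'])
      (fun i _ => by simpa [Set.mem_Ioi] using one_div_pos.2 (hpos i))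
    have hterm : ∀ i ∈ S, (p i / ε) • (1 / p i) = 1 / ε := fun i _ => by
      rw [smul_eq_mul]; field_simp [(hpos i).ne']
    rw [Finset.sum_congr rfl hterm, Finset.sum_const, nsmul_eq_mul] at key
    have hc : (S.card : ℝ) * (1 / ε) = ((K:ℝ) - 1) / ε := by rw [hcard]; ring
    rw [hc] at key
    have heq : ∑ i ∈ S, p i * Real.log (1 / p i)
        = ε * ∑ i ∈ S, (p i / ε) • Real.log (1 / p i) := by
      rw [Finset.mul_sum]
      exact Finset.sum_congr rfl fun i _ => by rw [smul_eq_mul]; field_simp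
    rw [heq]
    exact mul_le_mul_of_nonneg_left key hεpos.le
  have hstar : p istar * Real.log (1 / p istar) ≤ ε := by
    have h := Real.log_le_sub_one_of_pos (x := 1 / p istar) (one_div_pos.2 (hpos istar))
    have hp := hpos istar
    calc p istar * Real.log (1 / p istar) ≤ p istar * (1 / p istar - 1) :=
          mul_le_mul_of_nonneg_left h hp.le
      _ = ε := by rw [hε]; field_simp
  have split : ∑ i, p i * Real.log (1 / p i)
      = p istar * Real.log (1 / p istar) + ∑ i ∈ S, p i * Real.log (1 / p i) :=
    (Finset.add_sum_erase Finset.univ _ (Finset.mem_univ istar)).symm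
  rw [split]
  have hrhs : (1 - p istar) * (Real.log (((K:ℝ) - 1) / (1 - p istar)) + 1)
      = ε * Real.log (((K:ℝ) - 1) / ε) + ε := by rw [← hε]; ring
  rw [hrhs]
  linarith
end

section
/- Let b : ℕ → ℝ be a nonnegative sequence and let B_t = ∑_{s=1}^t b_s. Then for any c > 0 and every T ≥ 1, ∑_{t=1}^T b_t / (c + B_t^{1/3}) ≤ (3/2) · B_T^{2/3}. -/
lemma cube_root_step (x d c : ℝ) (hx : 0 ≤ x) (hd : 0 ≤ d) (hc : 0 < c) :
    d / (c + (x + d) ^ ((1 : ℝ) / 3)) ≤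
      3 / 2 * ((x + d) ^ ((2 : ℝ) / 3) - x ^ ((2 : ℝ) / 3)) := by
  set y := x + d with hy
  have hy0 : 0 ≤ y := by positivity
  set A := x ^ ((1 : ℝ) / 3) with hA
  set B := y ^ ((1 : ℝ) / 3) with hB
  have hA0 : 0 ≤ A := Real.rpow_nonneg hx _
  have hB0 : 0 ≤ B := Real.rpow_nonneg hy0 _
  have hAB : A ≤ B := Real.rpow_le_rpow hx (by linarith) (by norm_num)
  have hA3 : A ^ 3 = x := by
    rw [hA, ← Real.rpow_natCast (x ^ ((1:ℝ)/3)) 3, ← Real.rpow_mul hx]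
    norm_num
  have hB3 : B ^ 3 = y := by
    rw [hB, ← Real.rpow_natCast (y ^ ((1:ℝ)/3)) 3, ← Real.rpow_mul hy0]
    norm_num
  have hA2 : x ^ ((2:ℝ)/3) = A ^ 2 := by
    rw [hA, ← Real.rpow_natCast (x ^ ((1:ℝ)/3)) 2, ← Real.rpow_mul hx]
    norm_num
  have hB2 : y ^ ((2:ℝ)/3) = B ^ 2 := by
    rw [hB, ← Real.rpow_natCast (y ^ ((1:ℝ)/3)) 2, ← Real.rpow_mul hy0]
    norm_num
  rw [hA2, hB2]
  have hden : 0 < c + B := by linarith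
  rw [div_le_iff₀ hden]
  have hdval : d = B ^ 3 - A ^ 3 := by rw [hA3, hB3]; ring
  rw [hdval]
  nlinarith [mul_nonneg (mul_nonneg (sub_nonneg.2 hAB) (sub_nonneg.2 hAB)) (by linarith : 0 ≤ B + 2*A),
    mul_nonneg hc.le (mul_nonneg (sub_nonneg.2 hAB) (by linarith : 0 ≤ A + B))]

open Finset in
lemma sum_div_cube_root_bound_aux (b : ℕ → ℝ) (hb : ∀ t, 0 ≤ b t) (c : ℝ) (hc : 0 < c)
    (T : ℕ) :
    ∑ t ∈ Icc 1 T, b t / (c + (∑ s ∈ Icc 1 t, b s) ^ ((1 : ℝ) / 3)) ≤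
      3 / 2 * (∑ s ∈ Icc 1 T, b s) ^ ((2 : ℝ) / 3) := by
  induction T with
  | zero => simp
  | succ n ih =>
      rw [Finset.sum_Icc_succ_top (by omega : 1 ≤ n + 1),
        Finset.sum_Icc_succ_top (by omega : 1 ≤ n + 1)]
      have key := cube_root_step (∑ s ∈ Icc 1 n, b s) (b (n+1)) c
        (Finset.sum_nonneg fun i _ => hb i) (hb (n+1)) hc
      linarith

open Finset in
theorem sum_div_cube_root_bound (b : ℕ → ℝ) (hb : ∀ t, 0 ≤ b t) (c : ℝ) (hc : 0 < c)
    (T : ℕ) (hT : 1 ≤ T) :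
    ∑ t ∈ Icc 1 T, b t / (c + (∑ s ∈ Icc 1 t, b s) ^ ((1 : ℝ) / 3)) ≤
      3 / 2 * (∑ s ∈ Icc 1 T, b s) ^ ((2 : ℝ) / 3) := by
  exact sum_div_cube_root_bound_aux b hb c hc T
end

section
/- Let w : ℕ → ℝ be a sequence with w_t ≥ 0 and w_t ≤ 8·(1 + W_{t−1}) for all t ≥ 1, where W_t = ∑_{s=1}^t w_s and W_0 = 0. Then for every T ≥ 1, ∑_{t=1}^T w_t/(1 + W_{t−1}) ≤ 4·ln(1 + W_T). -/
lemma aux_log_ineq (x : ℝ) (hx0 : 0 ≤ x) (hx8 : x ≤ 8) :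
    x ≤ 4 * Real.log (1 + x) := by
  have hconv := convexOn_exp.2 (Set.mem_univ (0:ℝ)) (Set.mem_univ (2:ℝ))
    (show (0:ℝ) ≤ 1 - x/8 by linarith) (show (0:ℝ) ≤ x/8 by linarith)
    (show (1 - x/8) + x/8 = 1 by ring)
  have he2 : Real.exp 2 ≤ 9 := by
    have h := Real.exp_one_lt_d9
    have : Real.exp 2 = Real.exp 1 * Real.exp 1 := by
      rw [← Real.exp_add]; norm_num
    nlinarith [Real.exp_pos 1]
  have hkey : Real.exp (x/4) ≤ 1 + x := by
    simp only [smul_eq_mul, Real.exp_zero] at hconv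
    have h0 : (1 - x/8) * 0 + (x/8) * 2 = x/4 := by ring
    rw [h0] at hconv
    nlinarith
  have hpos : (0:ℝ) < 1 + x := by linarith
  have := (Real.le_log_iff_exp_le hpos).2 hkey
  linarith

open Finset in
theorem sum_ratio_le_log (w : ℕ → ℝ) (hnn : ∀ t, 0 ≤ w t)
    (hb : ∀ t, 1 ≤ t → w t ≤ 8 * (1 + ∑ s ∈ Icc 1 (t - 1), w s))
    (T : ℕ) (hT : 1 ≤ T) :
    ∑ t ∈ Icc 1 T, w t / (1 + ∑ s ∈ Icc 1 (t - 1), w s) ≤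
      4 * Real.log (1 + ∑ s ∈ Icc 1 T, w s) := by
  induction T, hT using Nat.le_induction with
  | base =>
      simp only [Icc_self, sum_singleton]
      have h0 : (Icc 1 (1-1) : Finset ℕ) = ∅ := by decide
      rw [h0]
      simp only [sum_empty, add_zero, div_one]
      exact aux_log_ineq (w 1) (hnn 1) (by simpa using hb 1 le_rfl)
  | succ T hT ih =>
      have hsum : ∀ n, (0:ℝ) ≤ ∑ s ∈ Icc 1 n, w s :=
        fun n => Finset.sum_nonneg fun s _ => hnn s
      set A : ℝ := 1 + ∑ s ∈ Icc 1 T, w s with hA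
      have hApos : 0 < A := by have := hsum T; simp only [hA]; linarith
      rw [Finset.sum_Icc_succ_top (by omega : 1 ≤ T + 1),
          Finset.sum_Icc_succ_top (by omega : 1 ≤ T + 1)]
      have hT1 : T + 1 - 1 = T := by omega
      rw [hT1]
      have hx0 : 0 ≤ w (T+1) / A := div_nonneg (hnn _) hApos.le
      have hx8 : w (T+1) / A ≤ 8 := by
        rw [div_le_iff₀ hApos]
        have := hb (T+1) (by omega)
        rw [hT1] at this
        nlinarith
      have hstep := aux_log_ineq _ hx0 hx8
      have hlog : Real.log (1 + ((∑ s ∈ Icc 1 T, w s) + w (T+1)))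
          = Real.log A + Real.log (1 + w (T+1) / A) := by
        have h1 : 1 + ((∑ s ∈ Icc 1 T, w s) + w (T+1)) = A * (1 + w (T+1) / A) := by
          field_simp; ring
        rw [h1, Real.log_mul hApos.ne' (by positivity)]
      rw [hlog]
      have hterm : w (T+1) / A ≤ 4 * Real.log (1 + w (T+1) / A) := hstep
      linarith
end

section
/- For any probability distribution p on a finite set V with |V| = K, ∑_{i∈V} (1 − p(i)) · ln(1/(1 − p(i))) ≤ (1 − p(i*)) · (ln(1/(1 − p(i*))) + 1) for any fixed i* ∈ V, provided p(i) < 1 for all i ≠ i* (with the convention 0·ln(1/0) = 0 when p(i*) = 1). -/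
/-! Apart from the term at `i*`, every summand `(1 - p i) * log (1 / (1 - p i))` is at most `p i`
(this is `t * log t ≥ t - 1` at `t = 1 - p i`), and the `p i` with `i ≠ i*` sum to `1 - p i*`. -/

open Real

lemma mul_log_one_div_le_one_sub {t : ℝ} (ht : 0 ≤ t) : t * log (1 / t) ≤ 1 - t := by
  rw [one_div, log_inv, mul_neg]
  linarith [self_sub_one_le_mul_log ht]

theorem sum_one_sub_log_bound_general {V : Type*} [Fintype V] (p : V → ℝ)
    (h1 : ∀ i, p i ≤ 1) (hsum : ∑ i, p i = 1)
    (istar : V) :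
    ∑ i, (1 - p i) * Real.log (1 / (1 - p i)) ≤
      (1 - p istar) * (Real.log (1 / (1 - p istar)) + 1) := by
  classical
  have hrest : ∑ i ∈ {istar}ᶜ, (1 - p i) * log (1 / (1 - p i)) ≤ ∑ i ∈ {istar}ᶜ, p i :=
    Finset.sum_le_sum fun i _ ↦ by linarith [mul_log_one_div_le_one_sub (sub_nonneg.2 (h1 i))]
  have hcompl : ∑ i ∈ {istar}ᶜ, p i = 1 - p istar := by
    rw [Fintype.sum_eq_add_sum_compl istar] at hsum
    linarith
  rw [Fintype.sum_eq_add_sum_compl istar]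
  linarith

theorem sum_one_sub_log_bound {V : Type*} [Fintype V] (p : V → ℝ)
    (h0 : ∀ i, 0 ≤ p i) (h1 : ∀ i, p i ≤ 1) (hsum : ∑ i, p i = 1)
    (istar : V) (hlt : ∀ i, i ≠ istar → p i < 1) :
    ∑ i, (1 - p i) * Real.log (1 / (1 - p i)) ≤
      (1 - p istar) * (Real.log (1 / (1 - p istar)) + 1) :=
  sum_one_sub_log_bound_general p h1 hsum istar
end

section
/- Define the Bregman divergence of the negative Shannon entropy scaled by β > 0: for probability distributions p, q on finite V with all entries positive, D(q, p) = β ∑_{i∈V} (q(i) ln(q(i)/p(i)) + p(i) − q(i)). Then for any loss vector ℓ : V → ℝ, ⟨ℓ, p − q⟩ − D(q, p) ≤ β · ∑_{i∈V} p(i) · ξ(ℓ(i)/β), where ξ(x) = exp(−x) + x − 1. -/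
/-! The bound holds coordinatewise. With `t = ℓ i / β`, the coordinate inequality rearranges to
`q - q log (q / w) ≤ w` for the Gibbs weight `w = p exp (-t)`, which is the elementary
`x - 1 ≤ x log x` at `x = q / w`; equality holds at `q = w`. -/

open Finset Real

lemma Real.sub_mul_log_div_le {x y : ℝ} (hx : 0 ≤ x) (hy : 0 < y) :
    x - x * log (x / y) ≤ y := by
  have h := self_sub_one_le_mul_log (div_nonneg hx hy.le)
  calc x - x * log (x / y) = y * (x / y - x / y * log (x / y)) := by field_simp
    _ ≤ y * 1 := by gcongr; linarith
    _ = y := mul_one y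

lemma mul_sub_sub_klTerm_le {p q : ℝ} (hp : 0 < p) (hq : 0 < q) (t : ℝ) :
    t * (p - q) - (q * log (q / p) + p - q) ≤ p * (exp (-t) + t - 1) := by
  have hGibbs := sub_mul_log_div_le hq.le (mul_pos hp (exp_pos (-t)))
  have hlog : log (q / (p * exp (-t))) = log (q / p) + t := by
    rw [← div_div, log_div (div_pos hq hp).ne' (exp_pos _).ne', log_exp, sub_neg_eq_add]
  rw [hlog] at hGibbs
  linarith

lemma mul_sub_sub_mul_klTerm_le {β : ℝ} (hβ : 0 < β) {p q : ℝ} (hp : 0 < p) (hq : 0 < q)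
    (ℓ : ℝ) :
    ℓ * (p - q) - β * (q * log (q / p) + p - q) ≤ β * (p * (exp (-(ℓ / β)) + ℓ / β - 1)) :=
  calc ℓ * (p - q) - β * (q * log (q / p) + p - q)
      = β * (ℓ / β * (p - q) - (q * log (q / p) + p - q)) := by field_simp
    _ ≤ β * (p * (exp (-(ℓ / β)) + ℓ / β - 1)) := by
      gcongr
      exact mul_sub_sub_klTerm_le hp hq _

theorem breg_shannon_bound_general {V : Type*} [Fintype V] (β : ℝ) (hβ : 0 < β)
    (p q : V → ℝ) (hp : ∀ i, 0 < p i) (hq : ∀ i, 0 < q i)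
    (ℓ : V → ℝ) :
    (∑ i, ℓ i * (p i - q i)) -
        β * ∑ i, (q i * Real.log (q i / p i) + p i - q i) ≤
      β * ∑ i, p i * (Real.exp (-(ℓ i / β)) + ℓ i / β - 1) := by
  rw [mul_sum, mul_sum, ← sum_sub_distrib]
  gcongr with i
  exact mul_sub_sub_mul_klTerm_le hβ (hp i) (hq i) (ℓ i)

theorem breg_shannon_bound {V : Type*} [Fintype V] (β : ℝ) (hβ : 0 < β)
    (p q : V → ℝ) (hp : ∀ i, 0 < p i) (hq : ∀ i, 0 < q i)
    (hps : ∑ i, p i = 1) (hqs : ∑ i, q i = 1) (ℓ : V → ℝ) :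
    (∑ i, ℓ i * (p i - q i)) -
        β * ∑ i, (q i * Real.log (q i / p i) + p i - q i) ≤
      β * ∑ i, p i * (Real.exp (-(ℓ i / β)) + ℓ i / β - 1) :=
  breg_shannon_bound_general β hβ p q hp hq ℓ
end

section
/- Let d(y, x) = (1/√x)·(√y − √x)² for x, y ∈ (0,1), which is the Bregman divergence of ψ(x) = −2√x. Then for any real ℓ, any p ∈ (0,1), any t > 0, and all q ∈ (0,1) with t + √p·ℓ > 0, ℓ·(p − q) − √t · d(q, p) ≤ √(t·p) · ζ(√p·ℓ/√t), where ζ(x) = x²/(1+x). -/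
theorem breg_sqrt_bound (ℓ p q t : ℝ) (hp0 : 0 < p) (hp1 : p < 1)
    (hq0 : 0 < q) (hq1 : q < 1) (ht : 0 < t)
    (hpos : 0 < Real.sqrt t + Real.sqrt p * ℓ) :
    ℓ * (p - q) -
        Real.sqrt t * (1 / Real.sqrt p * (Real.sqrt q - Real.sqrt p) ^ 2) ≤
      Real.sqrt (t * p) *
        ((Real.sqrt p * ℓ / Real.sqrt t) ^ 2 / (1 + Real.sqrt p * ℓ / Real.sqrt t)) := by
  set s := Real.sqrt t with hsdef
  set a := Real.sqrt p with hadef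
  set b := Real.sqrt q with hbdef
  have hs0 : 0 < s := Real.sqrt_pos.mpr ht
  have ha0 : 0 < a := Real.sqrt_pos.mpr hp0
  have hb0 : 0 < b := Real.sqrt_pos.mpr hq0
  have hpa : a ^ 2 = p := Real.sq_sqrt hp0.le
  have hqb : b ^ 2 = q := Real.sq_sqrt hq0.le
  have htp : Real.sqrt (t * p) = s * a := Real.sqrt_mul ht.le p
  have hc : 0 < s + a * ℓ := hpos
  rw [htp, ← hpa, ← hqb]
  have key : s * a * ((a * ℓ / s) ^ 2 / (1 + a * ℓ / s))
      - (ℓ * (a ^ 2 - b ^ 2) - s * (1 / a * (b - a) ^ 2))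
      = (s + a * ℓ) / a * (b - s * a / (s + a * ℓ)) ^ 2 := by
    have h1 : 1 + a * ℓ / s = (s + a * ℓ) / s := by field_simp
    rw [h1]
    field_simp
    ring
  have pos : 0 ≤ (s + a * ℓ) / a * (b - s * a / (s + a * ℓ)) ^ 2 :=
    mul_nonneg (div_pos hc ha0).le (sq_nonneg _)
  linarith
end

section
/- For m ≥ 1 and nonnegative reals x_{t,i} ≥ 0 for all t ∈ {1,...,T}, i ∈ {1,...,m}, we have ∑_{t=1}^T (1/√t)·∑_{i=1}^m √(x_{t,i}) ≤ √(m·(1 + ln T)·∑_{t=1}^T ∑_{i=1}^m x_{t,i}). -/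
open Finset in
theorem cauchy_schwarz_sqrt_sum (T m : ℕ) (hT : 1 ≤ T) (hm : 1 ≤ m)
    (x : ℕ → ℕ → ℝ) (hx : ∀ t i, 0 ≤ x t i) :
    ∑ t ∈ Icc 1 T, (1 / Real.sqrt t) * ∑ i ∈ Icc 1 m, Real.sqrt (x t i) ≤
      Real.sqrt (m * (1 + Real.log T) * ∑ t ∈ Icc 1 T, ∑ i ∈ Icc 1 m, x t i) := by
  have hS : ∀ t, (0:ℝ) ≤ ∑ i ∈ Icc 1 m, x t i := fun t => sum_nonneg fun i _ => hx t i
  have hStot : (0:ℝ) ≤ ∑ t ∈ Icc 1 T, ∑ i ∈ Icc 1 m, x t i := sum_nonneg fun t _ => hS t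
  have hlog : (0:ℝ) ≤ 1 + Real.log T := by
    have : (0:ℝ) ≤ Real.log T := Real.log_nonneg (by exact_mod_cast hT)
    linarith
  calc ∑ t ∈ Icc 1 T, (1 / Real.sqrt t) * ∑ i ∈ Icc 1 m, Real.sqrt (x t i)
      ≤ ∑ t ∈ Icc 1 T, (1 / Real.sqrt t) * (Real.sqrt m * Real.sqrt (∑ i ∈ Icc 1 m, x t i)) := by
        refine sum_le_sum fun t _ => ?_
        refine mul_le_mul_of_nonneg_left ?_ (by positivity)
        have := Real.sum_sqrt_mul_sqrt_le (Icc 1 m) (f := fun _ => (1:ℝ)) (g := x t)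
          (fun _ => zero_le_one) (fun i => hx t i)
        simpa [Nat.card_Icc] using this
    _ = Real.sqrt m * ∑ t ∈ Icc 1 T, Real.sqrt ((t:ℝ)⁻¹) * Real.sqrt (∑ i ∈ Icc 1 m, x t i) := by
        rw [mul_sum]; refine sum_congr rfl fun t _ => ?_
        rw [Real.sqrt_inv]; ring
    _ ≤ Real.sqrt m * (Real.sqrt (∑ t ∈ Icc 1 T, (t:ℝ)⁻¹) *
          Real.sqrt (∑ t ∈ Icc 1 T, ∑ i ∈ Icc 1 m, x t i)) := by
        refine mul_le_mul_of_nonneg_left ?_ (Real.sqrt_nonneg _)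
        exact Real.sum_sqrt_mul_sqrt_le _ (fun t => by positivity) (fun t => hS t)
    _ ≤ Real.sqrt m * (Real.sqrt (1 + Real.log T) *
          Real.sqrt (∑ t ∈ Icc 1 T, ∑ i ∈ Icc 1 m, x t i)) := by
        refine mul_le_mul_of_nonneg_left
          (mul_le_mul_of_nonneg_right (Real.sqrt_le_sqrt ?_) (Real.sqrt_nonneg _))
          (Real.sqrt_nonneg _)
        have h1 : (∑ t ∈ Icc 1 T, (t:ℝ)⁻¹) = (harmonic T : ℝ) := by
          rw [harmonic_eq_sum_Icc]; push_cast; rfl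
        rw [h1]; exact harmonic_le_one_add_log T
    _ = Real.sqrt (m * (1 + Real.log T) * ∑ t ∈ Icc 1 T, ∑ i ∈ Icc 1 m, x t i) := by
        rw [Real.sqrt_mul (by positivity), Real.sqrt_mul (by positivity), mul_assoc]
end
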